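/- Let p, n, k be positive integers with p ≥ 2, let S ⊆ {1,…,p} with |S| = k, and let L : ℝ^p → ℝ be twice continuously differentiable and satisfy the local RSC inequality with parameters α₁ > 0 and τ₁ ≥ 0: ⟨∇L(β+Δ) − ∇L(β), Δ⟩ ≥ α₁‖Δ‖₂² − τ₁ (log p / n)‖Δ‖₁² for all β ∈ ℝ^p and all Δ with ‖Δ‖₂ ≤ 1. Then: (1) for every β ∈ ℝ^p and every v ∈ ℝ^p with supp(v) ⊆ S and ‖v‖₂ = 1, one has vᵀ (∇²L(β)) v ≥ α₁ − τ₁ k (log p)/n. (2) Consequently, if ρ : ℝ → ℝ is μ-amenable with μ < α₁ and n ≥ (2τ₁/(α₁ − μ)) · k log p, then the function β ↦ L(β) − (μ/2)‖β‖₂² is strictly convex on the subspace {β ∈ ℝ^p : supp(β) ⊆ S}, and the restricted objective β ↦ L(β) + Σ_{j=1}^p ρ(β_j) is strictly convex on {β ∈ ℝ^p : supp(β) ⊆ S}. -/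

import Mathlib

open scoped BigOperators

/-- A function `ρ : ℝ → ℝ` is `μ`-amenable (with selection parameter `lam > 0`):
(i) symmetric around zero with `ρ 0 = 0`; (ii) nondecreasing on `[0, ∞)`;
(iii) `t ↦ ρ t / t` nonincreasing on `(0, ∞)`; (iv) differentiable away from `0`;
(v) `t ↦ ρ t + μ/2 t²` convex; (vi) `ρ'(t) → lam` as `t → 0⁺`. -/
structure Amenable (lam mu : ℝ) (ρ : ℝ → ℝ) : Prop where
  symm : ∀ t : ℝ, ρ (-t) = ρ t
  zero : ρ 0 = 0
  mono : MonotoneOn ρ (Set.Ici (0 : ℝ))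
  ratio : AntitoneOn (fun t => ρ t / t) (Set.Ioi (0 : ℝ))
  diff : ∀ t : ℝ, t ≠ 0 → DifferentiableAt ℝ ρ t
  conv : ConvexOn ℝ Set.univ (fun t => ρ t + mu / 2 * t ^ 2)
  deriv_lim : Filter.Tendsto (deriv ρ) (nhdsWithin 0 (Set.Ioi 0)) (nhds lam)


open scoped RealInnerProductSpace

/-- The ℓ₁-norm on `ℝ^p`. -/
noncomputable def norm1 {p : ℕ} (x : EuclideanSpace ℝ (Fin p)) : ℝ := ∑ j, |x j|

/-! Applied to `Δ = t v`, divided by `t²` and with `t → 0⁺`, the RSC inequality bounds the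
Hessian form `vᵀ ∇²L(β) v` from below; for `v` supported on `S`, Cauchy–Schwarz gives
`‖v‖₁² ≤ k‖v‖₂²`, so the bound is `(α₁ − τ₁ k log p / n)‖v‖₂²`. The sample-size condition makes
this curvature exceed `μ`, so `L − (μ/2)‖·‖²` has positive second derivative along every line of
the subspace and is strictly convex there; adding the convex `β ↦ Σⱼ (ρ(βⱼ) + (μ/2)βⱼ²)` keeps it
strictly convex. -/

open Set Filter Topology
open scoped RealInnerProductSpace

section Calculus

variable {E : Type*} [NormedAddCommGroup E] [NormedSpace ℝ E]

lemma ContDiff.differentiable_fderiv {f : E → ℝ} (hf : ContDiff ℝ 2 f) :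
    Differentiable ℝ (fderiv ℝ f) :=
  (hf.fderiv_right (m := 1) (by norm_num)).differentiable (by norm_num)

lemma hasDerivAt_comp_add_smul {F : Type*} [NormedAddCommGroup F] [NormedSpace ℝ F]
    {f : E → F} (hf : Differentiable ℝ f) (x v : E) (t : ℝ) :
    HasDerivAt (fun s : ℝ => f (x + s • v)) (fderiv ℝ f (x + t • v) v) t := by
  have hline : HasDerivAt (fun s : ℝ => x + s • v) v t := by
    simpa using ((hasDerivAt_id t).smul_const v).const_add x
  exact (hf _).hasFDerivAt.comp_hasDerivAt t hline

lemma hasDerivAt_fderiv_apply_add_smul {f : E → ℝ} (hf : ContDiff ℝ 2 f) (x v : E) (t : ℝ) :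
    HasDerivAt (fun s : ℝ => fderiv ℝ f (x + s • v) v)
      (fderiv ℝ (fderiv ℝ f) (x + t • v) v v) t := by
  simpa using (hasDerivAt_comp_add_smul hf.differentiable_fderiv x v t).clm_apply (hasDerivAt_const t v)

lemma deriv2_comp_add_smul {f : E → ℝ} (hf : ContDiff ℝ 2 f) (x v : E) (t : ℝ) :
    deriv^[2] (fun s : ℝ => f (x + s • v)) t = fderiv ℝ (fderiv ℝ f) (x + t • v) v v := by
  have hderiv : deriv (fun s : ℝ => f (x + s • v)) = fun s => fderiv ℝ f (x + s • v) v :=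
    funext fun s => (hasDerivAt_comp_add_smul (hf.differentiable (by norm_num)) x v s).deriv
  rw [Function.iterate_succ_apply, Function.iterate_one, hderiv]
  exact (hasDerivAt_fderiv_apply_add_smul hf x v t).deriv

lemma strictConvexOn_of_fderiv_fderiv_pos {f : E → ℝ} (V : Submodule ℝ E) (hf : ContDiff ℝ 2 f)
    (hpos : ∀ β ∈ V, ∀ v ∈ V, v ≠ 0 → 0 < fderiv ℝ (fderiv ℝ f) β v v) :
    StrictConvexOn ℝ V f := by
  refine ⟨V.convex, fun x hx y hy hxy a b ha hb hab => ?_⟩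
  have hv : y - x ∈ V := V.sub_mem hy hx
  have hline : StrictConvexOn ℝ univ fun s : ℝ => f (x + s • (y - x)) :=
    strictConvexOn_univ_of_deriv2_pos
      ((hf.continuous).comp (continuous_const.add (continuous_id.smul continuous_const)))
      fun s => by
        rw [deriv2_comp_add_smul hf]
        exact hpos _ (V.add_mem hx (V.smul_mem s hv)) _ hv (sub_ne_zero.2 hxy.symm)
  have hlt := hline.2 (mem_univ 0) (mem_univ 1) zero_ne_one ha hb hab
  have hcomb : x + (a • (0 : ℝ) + b • 1) • (y - x) = a • x + b • y := by
    rw [eq_sub_of_add_eq hab]; simp only [smul_eq_mul]; module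
  dsimp only at hlt
  rw [hcomb] at hlt
  simpa using hlt

end Calculus

section InnerProductSpace

variable {E : Type*} [NormedAddCommGroup E] [InnerProductSpace ℝ E]

lemma fderiv_fderiv_sub_norm_sq_apply {f : E → ℝ} (hf : ContDiff ℝ 2 f) (μ : ℝ) (β v : E) :
    fderiv ℝ (fderiv ℝ fun x => f x - μ / 2 * ‖x‖ ^ 2) β v v =
      fderiv ℝ (fderiv ℝ f) β v v - μ * ‖v‖ ^ 2 := by
  have hdf : Differentiable ℝ f := hf.differentiable (by norm_num)
  have hfirst : fderiv ℝ (fun x => f x - μ / 2 * ‖x‖ ^ 2) =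
      fun x => fderiv ℝ f x - (μ • innerSL ℝ (E := E)) x := by
    funext x
    have hnorm := (hasStrictFDerivAt_norm_sq x).hasFDerivAt.differentiableAt
    rw [fderiv_fun_sub (hdf x) (hnorm.const_mul _), fderiv_const_mul hnorm, fderiv_norm_sq_apply]
    ext w
    simp only [sub_apply, smul_apply, coe_innerSL_apply, nsmul_eq_mul, Nat.cast_ofNat, smul_eq_mul,
      sub_right_inj]
    ring
  rw [hfirst, fderiv_fun_sub (hf.differentiable_fderiv β) (ContinuousLinearMap.differentiableAt _),
    ContinuousLinearMap.fderiv, ← real_inner_self_eq_norm_sq]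
  rfl

variable [CompleteSpace E]

lemma mul_norm_sq_le_fderiv_fderiv {f : E → ℝ} (V : Submodule ℝ E) (hf : ContDiff ℝ 2 f)
    {c : ℝ} {β : E}
    (hmono : ∀ Δ ∈ V, ‖Δ‖ ≤ 1 → c * ‖Δ‖ ^ 2 ≤ ⟪gradient f (β + Δ) - gradient f β, Δ⟫)
    {v : E} (hv : v ∈ V) : c * ‖v‖ ^ 2 ≤ fderiv ℝ (fderiv ℝ f) β v v := by
  set h : ℝ → ℝ := fun s => fderiv ℝ f (β + s • v) v
  have hderiv : HasDerivAt h (fderiv ℝ (fderiv ℝ f) β v v) 0 := by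
    simpa using hasDerivAt_fderiv_apply_add_smul hf β v 0
  have hslope : Tendsto (slope h 0) (𝓝[>] 0) (𝓝 (fderiv ℝ (fderiv ℝ f) β v v)) :=
    (hasDerivAt_iff_tendsto_slope.mp hderiv).mono_left (nhdsWithin_mono 0 fun t ht => ne_of_gt ht)
  have hsmall : ∀ᶠ t : ℝ in 𝓝[>] 0, ‖t • v‖ ≤ 1 := by
    have : Tendsto (fun t : ℝ => t • v) (𝓝 0) (𝓝 0) := by
      simpa using (tendsto_id (x := 𝓝 (0 : ℝ))).smul_const v
    exact ((this.mono_left nhdsWithin_le_nhds).eventually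
      (Metric.closedBall_mem_nhds 0 one_pos)).mono fun t ht => mem_closedBall_zero_iff.mp ht
  refine ge_of_tendsto hslope ?_
  filter_upwards [hsmall, self_mem_nhdsWithin] with t ht (htpos : 0 < t)
  have hinner : ⟪gradient f (β + t • v) - gradient f β, t • v⟫ = t * (h t - h 0) := by
    simp only [inner_sub_left, inner_gradient_left, map_smul, smul_eq_mul, zero_smul, add_zero, h]
    ring
  have hbound := hmono (t • v) (V.smul_mem t hv) ht
  rw [hinner, norm_smul, Real.norm_eq_abs, abs_of_pos htpos] at hbound
  rw [slope_def_field, sub_zero, le_div_iff₀ htpos]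
  nlinarith

end InnerProductSpace

def supportedOn {ι : Type*} [Fintype ι] (S : Finset ι) : Submodule ℝ (EuclideanSpace ℝ ι) where
  carrier := {β | ∀ j ∉ S, β j = 0}
  add_mem' hx hy j hj := by simp [hx j hj, hy j hj]
  zero_mem' _ _ := rfl
  smul_mem' c x hx j hj := by simp [hx j hj]

lemma norm1_sq_le_card_mul_norm_sq {p : ℕ} {S : Finset (Fin p)}
    {x : EuclideanSpace ℝ (Fin p)} (hx : x ∈ supportedOn S) :
    norm1 x ^ 2 ≤ S.card * ‖x‖ ^ 2 := by
  have hsum : norm1 x = ∑ j ∈ S, |x j| :=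
    (Finset.sum_subset (Finset.subset_univ S) fun j _ hj => by simp [hx j hj]).symm
  have hnorm : ∑ j ∈ S, |x j| ^ 2 ≤ ‖x‖ ^ 2 := by
    rw [EuclideanSpace.real_norm_sq_eq]
    simp_rw [sq_abs]
    exact Finset.sum_le_sum_of_subset_of_nonneg (Finset.subset_univ S) fun j _ _ => sq_nonneg _
  calc norm1 x ^ 2 ≤ S.card * ∑ j ∈ S, |x j| ^ 2 := hsum ▸ sq_sum_le_card_mul_sum_sq
    _ ≤ S.card * ‖x‖ ^ 2 := by gcongr

def LocalRSC {p : ℕ} (L : EuclideanSpace ℝ (Fin p) → ℝ) (α₁ τ₁ : ℝ) (n : ℕ) : Prop :=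
  ∀ β Δ : EuclideanSpace ℝ (Fin p), ‖Δ‖ ≤ 1 →
    α₁ * ‖Δ‖ ^ 2 - τ₁ * (Real.log p / n) * (norm1 Δ) ^ 2 ≤
      ⟪gradient L (β + Δ) - gradient L β, Δ⟫

namespace LocalRSC

variable {p n : ℕ} {L : EuclideanSpace ℝ (Fin p) → ℝ} {α₁ τ₁ : ℝ}

lemma le_inner_gradient_sub (hRSC : LocalRSC L α₁ τ₁ n) (hτ₁ : 0 ≤ τ₁) {S : Finset (Fin p)}
    (β : EuclideanSpace ℝ (Fin p)) {Δ : EuclideanSpace ℝ (Fin p)} (hΔS : Δ ∈ supportedOn S)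
    (hΔ : ‖Δ‖ ≤ 1) :
    (α₁ - τ₁ * S.card * Real.log p / n) * ‖Δ‖ ^ 2 ≤
      ⟪gradient L (β + Δ) - gradient L β, Δ⟫ := by
  have hweight : 0 ≤ τ₁ * (Real.log p / n) := by
    have := Real.log_natCast_nonneg p
    positivity
  calc (α₁ - τ₁ * S.card * Real.log p / n) * ‖Δ‖ ^ 2
      = α₁ * ‖Δ‖ ^ 2 - τ₁ * (Real.log p / n) * (S.card * ‖Δ‖ ^ 2) := by ring
    _ ≤ α₁ * ‖Δ‖ ^ 2 - τ₁ * (Real.log p / n) * (norm1 Δ) ^ 2 := by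
      gcongr
      exact norm1_sq_le_card_mul_norm_sq hΔS
    _ ≤ _ := hRSC β Δ hΔ

lemma mul_norm_sq_le_fderiv_fderiv (hRSC : LocalRSC L α₁ τ₁ n) (hτ₁ : 0 ≤ τ₁)
    (hL : ContDiff ℝ 2 L) {S : Finset (Fin p)} (β : EuclideanSpace ℝ (Fin p))
    {v : EuclideanSpace ℝ (Fin p)} (hv : v ∈ supportedOn S) :
    (α₁ - τ₁ * S.card * Real.log p / n) * ‖v‖ ^ 2 ≤ fderiv ℝ (fderiv ℝ L) β v v :=
  _root_.mul_norm_sq_le_fderiv_fderiv (supportedOn S) hL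
    (fun _ hΔS hΔ => hRSC.le_inner_gradient_sub hτ₁ β hΔS hΔ) hv

end LocalRSC

lemma convexOn_univ_sum_comp_apply {ι : Type*} [Fintype ι] {φ : ℝ → ℝ}
    (hφ : ConvexOn ℝ univ φ) : ConvexOn ℝ univ fun x : EuclideanSpace ℝ ι => ∑ j, φ (x j) := by
  have hcoord (j : ι) : ConvexOn ℝ univ fun x : EuclideanSpace ℝ ι => φ (x j) :=
    hφ.comp_linearMap (EuclideanSpace.projₗ j)
  simpa only [Finset.sum_fn] using
    Finset.sum_induction (s := Finset.univ) (fun j (x : EuclideanSpace ℝ ι) => φ (x j))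
      (ConvexOn ℝ univ)
      (fun _ _ => ConvexOn.add) (convexOn_const 0 convex_univ) fun j _ => hcoord j

lemma lt_sub_mul_div_of_two_mul_div_mul_le {α μ τ a N : ℝ} (hN : 0 ≤ N) (hμ : μ < α)
    (h : 2 * τ / (α - μ) * a ≤ N) : μ < α - τ * a / N := by
  have hhalf : τ * a / N ≤ (α - μ) / 2 := by
    refine div_le_of_le_mul₀ hN (by linarith) ?_
    calc τ * a = (α - μ) / 2 * (2 * τ / (α - μ) * a) := by field_simp [(sub_pos.2 hμ).ne']
      _ ≤ (α - μ) / 2 * N := by gcongr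
  linarith

theorem restricted_strict_convexity (p n k : ℕ)
    (S : Finset (Fin p)) (hS : S.card = k)
    (L : EuclideanSpace ℝ (Fin p) → ℝ) (hL : ContDiff ℝ 2 L)
    (α₁ τ₁ : ℝ) (hτ₁ : 0 ≤ τ₁)
    (hRSC : ∀ β Δ : EuclideanSpace ℝ (Fin p), ‖Δ‖ ≤ 1 →
      α₁ * ‖Δ‖ ^ 2 - τ₁ * (Real.log p / n) * (norm1 Δ) ^ 2 ≤
        ⟪gradient L (β + Δ) - gradient L β, Δ⟫) :
    (∀ (β v : EuclideanSpace ℝ (Fin p)), (∀ j ∉ S, v j = 0) → ‖v‖ = 1 →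
      α₁ - τ₁ * k * Real.log p / n ≤ iteratedFDeriv ℝ 2 L β ![v, v]) ∧
    (∀ (lam mu : ℝ) (ρ : ℝ → ℝ), 0 < lam → 0 ≤ mu → Amenable lam mu ρ → mu < α₁ →
      2 * τ₁ / (α₁ - mu) * (k * Real.log p) ≤ n →
      StrictConvexOn ℝ {β : EuclideanSpace ℝ (Fin p) | ∀ j ∉ S, β j = 0}
        (fun β => L β - mu / 2 * ‖β‖ ^ 2) ∧
      StrictConvexOn ℝ {β : EuclideanSpace ℝ (Fin p) | ∀ j ∉ S, β j = 0}
        (fun β => L β + ∑ j, ρ (β j))) := by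
  subst hS
  have hHess := LocalRSC.mul_norm_sq_le_fderiv_fderiv hRSC hτ₁ hL (S := S)
  refine ⟨fun β v hv hv1 => by simpa [iteratedFDeriv_two_apply, hv1] using hHess β hv,
    fun lam mu ρ _ _ hρ hmu hsample => ?_⟩
  have hgap : mu < α₁ - τ₁ * S.card * Real.log p / n := by
    simpa only [mul_assoc] using lt_sub_mul_div_of_two_mul_div_mul_le n.cast_nonneg hmu hsample
  have hstrict : StrictConvexOn ℝ (supportedOn S) fun β => L β - mu / 2 * ‖β‖ ^ 2 := by
    refine strictConvexOn_of_fderiv_fderiv_pos _ (hL.sub (contDiff_const.mul (contDiff_norm_sq ℝ)))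
      fun β _ v hv hv0 => ?_
    rw [fderiv_fderiv_sub_norm_sq_apply hL]
    have hcurv := hHess β hv
    have hv2 : 0 < ‖v‖ ^ 2 := by positivity
    nlinarith
  have hsplit : (fun β : EuclideanSpace ℝ (Fin p) => L β + ∑ j, ρ (β j)) =
      fun β => (L β - mu / 2 * ‖β‖ ^ 2) + ∑ j, (ρ (β j) + mu / 2 * β j ^ 2) := by
    funext β
    rw [Finset.sum_add_distrib, ← Finset.mul_sum, ← EuclideanSpace.real_norm_sq_eq]
    ring
  refine ⟨hstrict, hsplit ▸ hstrict.add_convexOn ?_⟩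
  exact (convexOn_univ_sum_comp_apply hρ.conv).subset (subset_univ _) (supportedOn S).convex
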